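/- arXiv:2504.11941 — 2 statements merged into one kernel-verified Lean document; each statement's English description precedes it below -/
import Mathlib

section
/- Let H be a d-uniform hypergraph and 2 ≤ k ≤ ν(H). Then aim(H,k) ≤ aim(H,k−1) + 1. -/
open scoped Classical

variable {V : Type*} [DecidableEq V]

/-- A matching of a hypergraph with edge set `E`: a set of pairwise disjoint edges. -/
def IsMatching (E M : Finset (Finset V)) : Prop :=
  M ⊆ E ∧ ∀ e ∈ M, ∀ f ∈ M, e ≠ f → Disjoint e f

/-- The set of vertices covered by a set of edges. -/
def verts (M : Finset (Finset V)) : Finset V := M.sup id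

/-- Edge set of the induced sub-hypergraph on the vertex set `W`. -/
def inducedSub (E : Finset (Finset V)) (W : Finset V) : Finset (Finset V) :=
  E.filter (fun e => e ⊆ W)

/-- The matching number. -/
noncomputable def matchNum (E : Finset (Finset V)) : ℕ :=
  sSup {n : ℕ | ∃ M : Finset (Finset V), IsMatching E M ∧ M.card = n}

/-- `P` is a partition of the finite set `M` into nonempty pairwise disjoint parts. -/
def IsPartitionOf (M : Finset (Finset V)) (P : Finset (Finset (Finset V))) : Prop :=
  (∀ p ∈ P, p ≠ ∅) ∧ (∀ p ∈ P, ∀ q ∈ P, p ≠ q → Disjoint p q) ∧ P.sup id = M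

/-- A partition witnessing that `M` is a generalized `k`-admissible matching. -/
def GenAdmPartition (E M : Finset (Finset V)) (k : ℕ)
    (P : Finset (Finset (Finset V))) : Prop :=
  IsPartitionOf M P ∧
  (∀ e ∈ inducedSub E (verts M), ∃ p ∈ P, e ⊆ verts p) ∧
  k ≤ M.card ∧ M.card ≤ P.card + k - 1 ∧
  ∀ p ∈ P, ∀ M' : Finset (Finset V),
    IsMatching (inducedSub E (verts p)) M' → M'.card = p.card → verts M' = verts p

/-- Generalized `k`-admissible matching. -/
def IsGenAdmissible (E M : Finset (Finset V)) (k : ℕ) : Prop :=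
  IsMatching E M ∧ ∃ P, GenAdmPartition E M k P

/-- A partition witnessing that `M` is a `k`-admissible matching (d-uniform setting). -/
def AdmPartition (E M : Finset (Finset V)) (k : ℕ)
    (P : Finset (Finset (Finset V))) : Prop :=
  IsPartitionOf M P ∧
  (∀ e ∈ inducedSub E (verts M), ∃ p ∈ P, e ⊆ verts p) ∧
  M.card ≤ P.card + k - 1

/-- `k`-admissible matching. -/
def IsAdmissible (E M : Finset (Finset V)) (k : ℕ) : Prop :=
  IsMatching E M ∧ ∃ P, AdmPartition E M k P

/-- The `k`-admissible matching number `aim(H, k)`. -/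
noncomputable def aim (E : Finset (Finset V)) (k : ℕ) : ℕ :=
  sSup {n : ℕ | ∃ M : Finset (Finset V), IsAdmissible E M k ∧ M.card = n}

/-!
Let `M` be a `k`-admissible matching witnessed by the partition `P`. If `|M| ≤ |P| + k - 2`,
then `P` already witnesses that `M` is `(k - 1)`-admissible. Otherwise `|M| > |P|` (as `k ≥ 2`),
so some part contains two edges. Erasing one of them, `e`, from `M` and from its part keeps the
number of parts, and every edge of `H` inside `V(M) \ e` still lies inside one of the shrunken parts,
so `M - e` is `(k - 1)`-admissible.
-/

lemma IsMatching.subset {W : Type*} {E M N : Finset (Finset W)} (hM : IsMatching E M)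
    (h : N ⊆ M) : IsMatching E N :=
  ⟨h.trans hM.1, fun f hf g hg hfg => hM.2 f (h hf) g (h hg) hfg⟩

section

variable {E M : Finset (Finset V)} {P : Finset (Finset (Finset V))} {e : Finset V} {k : ℕ}

lemma mem_verts {x : V} : x ∈ verts M ↔ ∃ f ∈ M, x ∈ f := by
  simp [verts, Finset.mem_sup]

lemma verts_sdiff_subset_verts_erase (M : Finset (Finset V)) (e : Finset V) :
    verts M \ e ⊆ verts (M.erase e) := by
  intro x hx
  obtain ⟨hxM, hxe⟩ := Finset.mem_sdiff.mp hx
  obtain ⟨f, hfM, hxf⟩ := mem_verts.mp hxM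
  exact mem_verts.mpr ⟨f, Finset.mem_erase.mpr ⟨fun hfe => hxe (hfe ▸ hxf), hfM⟩, hxf⟩

lemma IsMatching.verts_erase (hM : IsMatching E M) (he : e ∈ M) :
    verts (M.erase e) = verts M \ e := by
  refine subset_antisymm (fun x hx => ?_) (verts_sdiff_subset_verts_erase M e)
  obtain ⟨f, hf, hxf⟩ := mem_verts.mp hx
  obtain ⟨hfe, hfM⟩ := Finset.mem_erase.mp hf
  exact Finset.mem_sdiff.mpr ⟨mem_verts.mpr ⟨f, hfM, hxf⟩,
    Finset.disjoint_left.mp (hM.2 f hfM e he hfe) hxf⟩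

lemma IsPartitionOf.subset (hP : IsPartitionOf M P) {p : Finset (Finset V)} (hp : p ∈ P) :
    p ⊆ M :=
  hP.2.2 ▸ Finset.le_sup (f := id) hp

lemma IsPartitionOf.exists_two_le_card (hP : IsPartitionOf M P) (hcard : P.card < M.card) :
    ∃ p ∈ P, 2 ≤ p.card := by
  by_contra! hsmall
  have : M.card ≤ P.card :=
    calc M.card = (P.biUnion id).card := by rw [← Finset.sup_eq_biUnion, hP.2.2]
      _ ≤ ∑ p ∈ P, p.card := Finset.card_biUnion_le
      _ ≤ ∑ _p ∈ P, 1 := Finset.sum_le_sum fun p hp => Nat.le_of_lt_succ (hsmall p hp)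
      _ = P.card := by simp
  omega

lemma IsPartitionOf.erase_ne_empty (hP : IsPartitionOf M P) {p : Finset (Finset V)} (hp : p ∈ P)
    (hep : e ∈ p) (hp2 : 2 ≤ p.card) : ∀ q ∈ P, q.erase e ≠ ∅ := by
  intro q hq
  by_cases hqp : q = p
  · subst hqp
    refine Finset.nonempty_iff_ne_empty.mp (Finset.card_pos.mp ?_)
    rw [Finset.card_erase_of_mem hep]
    omega
  · rw [Finset.erase_eq_of_notMem fun heq =>
      Finset.disjoint_left.mp (hP.2.1 q hq p hp hqp) heq hep]
    exact hP.1 q hq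

lemma IsPartitionOf.image_erase (hP : IsPartitionOf M P) (hne : ∀ q ∈ P, q.erase e ≠ ∅) :
    IsPartitionOf (M.erase e) (P.image (·.erase e)) := by
  refine ⟨?_, ?_, ?_⟩
  · simp only [Finset.mem_image, forall_exists_index, and_imp]
    rintro _ q hq rfl
    exact hne q hq
  · simp only [Finset.mem_image, forall_exists_index, and_imp]
    rintro _ q hq rfl _ r hr rfl hqr
    have hqr' : q ≠ r := fun h => hqr (h ▸ rfl)
    exact (hP.2.1 q hq r hr hqr').mono (Finset.erase_subset e q) (Finset.erase_subset e r)
  · rw [Finset.sup_image, Finset.erase_eq, ← hP.2.2, ← Finset.sup_sdiff_right]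
    simp [Finset.erase_eq]

lemma IsPartitionOf.card_image_erase (hP : IsPartitionOf M P) (hne : ∀ q ∈ P, q.erase e ≠ ∅) :
    (P.image (·.erase e)).card = P.card := by
  refine Finset.card_image_of_injOn fun q hq r hr hqr => ?_
  by_contra hqr'
  have hdisj := (hP.2.1 q hq r hr hqr').mono (Finset.erase_subset e q) (Finset.erase_subset e r)
  exact hne q hq (disjoint_self.mp (by simpa [← hqr] using hdisj))

lemma AdmPartition.erase (hM : IsMatching E M) (hP : AdmPartition E M k P) (he : e ∈ M)
    (hne : ∀ q ∈ P, q.erase e ≠ ∅) :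
    AdmPartition E (M.erase e) (k - 1) (P.image (·.erase e)) := by
  obtain ⟨hpart, hcover, hcard⟩ := hP
  refine ⟨hpart.image_erase hne, fun f hf => ?_, ?_⟩
  · obtain ⟨hfE, hfM⟩ := Finset.mem_filter.mp hf
    rw [hM.verts_erase he] at hfM
    obtain ⟨q, hq, hfq⟩ :=
      hcover f (Finset.mem_filter.mpr ⟨hfE, hfM.trans Finset.sdiff_subset⟩)
    refine ⟨q.erase e, Finset.mem_image_of_mem _ hq, fun x hx => ?_⟩
    exact verts_sdiff_subset_verts_erase q e
      (Finset.mem_sdiff.mpr ⟨hfq hx, (Finset.mem_sdiff.mp (hfM hx)).2⟩)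
  · rw [Finset.card_erase_of_mem he, hpart.card_image_erase hne]
    omega

lemma IsAdmissible.exists_pred (hM : IsAdmissible E M k) (hk : 2 ≤ k) :
    ∃ M', IsAdmissible E M' (k - 1) ∧ M.card ≤ M'.card + 1 := by
  obtain ⟨hmatch, P, hP⟩ := hM
  by_cases hslack : M.card ≤ P.card + (k - 1) - 1
  · exact ⟨M, ⟨hmatch, P, hP.1, hP.2.1, hslack⟩, Nat.le_succ _⟩
  obtain ⟨p, hp, hp2⟩ := hP.1.exists_two_le_card (by omega)
  obtain ⟨e, hep⟩ := Finset.card_pos.mp (by omega : 0 < p.card)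
  have he : e ∈ M := hP.1.subset hp hep
  refine ⟨M.erase e, ⟨hmatch.subset (M.erase_subset e), _,
    hP.erase hmatch he (hP.1.erase_ne_empty hp hep hp2)⟩, ?_⟩
  rw [Finset.card_erase_of_mem he]
  omega

lemma card_le_aim (hM : IsAdmissible E M k) : M.card ≤ aim E k :=
  le_csSup ⟨E.card, by rintro _ ⟨N, hN, rfl⟩; exact Finset.card_le_card hN.1.1⟩ ⟨M, hM, rfl⟩

lemma aim_le_of_forall_card_le {n : ℕ} (h : ∀ M, IsAdmissible E M k → M.card ≤ n) :
    aim E k ≤ n :=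
  csSup_le' <| by rintro _ ⟨M, hM, rfl⟩; exact h M hM

end

theorem aim_le_aim_pred_add_one_general (E : Finset (Finset V)) (k : ℕ) (hk1 : 2 ≤ k) :
    aim E k ≤ aim E (k - 1) + 1 := by
  refine aim_le_of_forall_card_le fun M hM => ?_
  obtain ⟨M', hM', hcard⟩ := hM.exists_pred hk1
  exact hcard.trans (Nat.add_le_add_right (card_le_aim hM') 1)

/-- For a `d`-uniform hypergraph and `2 ≤ k ≤ ν(H)`, `aim(H,k) ≤ aim(H,k-1) + 1`. -/
theorem aim_le_aim_pred_add_one (E : Finset (Finset V)) (d k : ℕ) (hd : 1 ≤ d)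
    (hunif : ∀ e ∈ E, e.card = d) (hk1 : 2 ≤ k) (hk2 : k ≤ matchNum E) :
    aim E k ≤ aim E (k - 1) + 1 :=
  aim_le_aim_pred_add_one_general E k hk1
end

section
/- Let G be a chordal graph with edge {x,y}, and let G~ be the graph on V(G)\{x,y} with edges E(G\{x,y}) ∪ {{u,v} : u ∈ N_G(x)\{y}, v ∈ N_G(y)\{x}, u ≠ v}. Suppose w_1,w_2,w_3,w_4 induce a 4-cycle in G~ with edges {w_1,w_2},{w_2,w_3},{w_3,w_4},{w_1,w_4}, where {x,w_1},{y,w_4} ∈ E(G) and {w_1,w_4} ∈ E(G~)\E(G). Then {x,w_3} ∈ E(G) and {y,w_2} ∈ E(G). -/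
open scoped Classical

variable {V : Type*} [DecidableEq V]

/-- `G` has an induced cycle on `n` vertices. -/
def HasInducedCycle {W : Type*} (G : SimpleGraph W) (n : ℕ) : Prop :=
  ∃ f : Fin n → W, Function.Injective f ∧
    ∀ i j : Fin n, G.Adj (f i) (f j) ↔ ((j : ℕ) = ((i : ℕ) + 1) % n ∨ (i : ℕ) = ((j : ℕ) + 1) % n)

/-- A graph is chordal if it has no induced cycle of length at least `4`. -/
def Chordal {W : Type*} (G : SimpleGraph W) : Prop :=
  ∀ n : ℕ, 4 ≤ n → ¬ HasInducedCycle G n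

/-- The graph `G~` associated to the edge `{x,y}` of `G`: its vertices are those of `G`
other than `x, y`; its edges are the edges of `G \ {x,y}` together with all pairs `{u,v}`
with `u ∈ N_G(x) \ {y}`, `v ∈ N_G(y) \ {x}`, `u ≠ v`.  (Here it is realized as a graph
on the vertex set of `G` in which `x` and `y` are isolated.) -/
def tildeGraph (G : SimpleGraph V) (x y : V) : SimpleGraph V :=
  SimpleGraph.fromRel (fun u v =>
    u ≠ x ∧ u ≠ y ∧ v ≠ x ∧ v ≠ y ∧ (G.Adj u v ∨ (G.Adj x u ∧ G.Adj y v)))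

/-! The non-edges `w₁w₃`, `w₂w₄` of `G~` rule out `y ~ w₃` and `x ~ w₂`. Hence the `G~`-edge
`w₂w₃` either comes from `x ~ w₃`, `y ~ w₂`, which is the claim, or is an edge of `G`. In the
latter case `x w₁ w₂ w₃ w₄ y` closes up through the edge `xy` to a hexagon in `G`, except that
`w₁w₂` may be replaced by `yw₂` and `w₃w₄` by `xw₃`. If `xw₃` or `yw₂` were missing, one of
`x w₁ w₂ w₃`, `w₂ w₃ w₄ y`, `x w₁ w₂ w₃ w₄`, `w₁ w₂ w₃ w₄ y` or the hexagon itself would be an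
induced cycle of length at least `4`. -/

namespace SimpleGraph

variable {W : Type*} (G : SimpleGraph W)

theorem hasInducedCycle_four {a b c d : W} (hnd : [a, b, c, d].Nodup)
    (hab : G.Adj a b) (hbc : G.Adj b c) (hcd : G.Adj c d) (hda : G.Adj d a)
    (hac : ¬ G.Adj a c) (hbd : ¬ G.Adj b d) :
    HasInducedCycle G 4 := by
  refine ⟨![a, b, c, d], List.nodup_ofFn.mp (by simpa [List.ofFn_succ] using hnd),
    fun i j => ?_⟩
  fin_cases i <;> fin_cases j <;> simp <;> grind [SimpleGraph.adj_comm, SimpleGraph.irrefl]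

theorem hasInducedCycle_five {a b c d e : W} (hnd : [a, b, c, d, e].Nodup)
    (hab : G.Adj a b) (hbc : G.Adj b c) (hcd : G.Adj c d) (hde : G.Adj d e) (hea : G.Adj e a)
    (hac : ¬ G.Adj a c) (had : ¬ G.Adj a d) (hbd : ¬ G.Adj b d) (hbe : ¬ G.Adj b e)
    (hce : ¬ G.Adj c e) :
    HasInducedCycle G 5 := by
  refine ⟨![a, b, c, d, e], List.nodup_ofFn.mp (by simpa [List.ofFn_succ] using hnd),
    fun i j => ?_⟩
  fin_cases i <;> fin_cases j <;> simp <;> grind [SimpleGraph.adj_comm, SimpleGraph.irrefl]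

theorem hasInducedCycle_six {a b c d e f : W} (hnd : [a, b, c, d, e, f].Nodup)
    (hab : G.Adj a b) (hbc : G.Adj b c) (hcd : G.Adj c d) (hde : G.Adj d e)
    (hef : G.Adj e f) (hfa : G.Adj f a)
    (hac : ¬ G.Adj a c) (had : ¬ G.Adj a d) (hae : ¬ G.Adj a e)
    (hbd : ¬ G.Adj b d) (hbe : ¬ G.Adj b e) (hbf : ¬ G.Adj b f)
    (hce : ¬ G.Adj c e) (hcf : ¬ G.Adj c f) (hdf : ¬ G.Adj d f) :
    HasInducedCycle G 6 := by
  refine ⟨![a, b, c, d, e, f], List.nodup_ofFn.mp (by simpa [List.ofFn_succ] using hnd),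
    fun i j => ?_⟩
  fin_cases i <;> fin_cases j <;> simp <;> grind [SimpleGraph.adj_comm, SimpleGraph.irrefl]

end SimpleGraph

namespace Chordal

variable {W : Type*} {G : SimpleGraph W} {x a b c d y : W}

theorem adj_or_adj_of_hexagon (hG : Chordal G) (hnd : [x, a, b, c, d, y].Nodup)
    (hxa : G.Adj x a) (hab : G.Adj a b) (hbc : G.Adj b c) (hcd : G.Adj c d)
    (hdy : G.Adj d y) (hyx : G.Adj y x)
    (hxb : ¬ G.Adj x b) (hac : ¬ G.Adj a c) (had : ¬ G.Adj a d) (hbd : ¬ G.Adj b d)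
    (hyc : ¬ G.Adj y c) :
    G.Adj x c ∨ G.Adj y b := by
  by_contra! ⟨hxc, hyb⟩
  by_cases hxd : G.Adj x d
  · exact hG 5 (by norm_num) <| G.hasInducedCycle_five (hnd.sublist (by simp))
      hxa hab hbc hcd hxd.symm hxb hxc hac had hbd
  by_cases hya : G.Adj y a
  · exact hG 5 (by norm_num) <| G.hasInducedCycle_five (hnd.sublist (by simp))
      hab hbc hcd hdy hya hac had hbd (fun h => hyb h.symm) (fun h => hyc h.symm)
  exact hG 6 (by norm_num) <| G.hasInducedCycle_six hnd hxa hab hbc hcd hdy hyx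
    hxb hxc hxd hac had (fun h => hya h.symm) hbd (fun h => hyb h.symm) (fun h => hyc h.symm)

theorem adj_and_adj_of_weak_hexagon (hG : Chordal G) (hnd : [x, a, b, c, d, y].Nodup)
    (hxa : G.Adj x a) (hab : G.Adj a b ∨ G.Adj y b) (hbc : G.Adj b c)
    (hcd : G.Adj c d ∨ G.Adj x c) (hdy : G.Adj d y) (hyx : G.Adj y x)
    (hxb : ¬ G.Adj x b) (hac : ¬ G.Adj a c) (had : ¬ G.Adj a d) (hbd : ¬ G.Adj b d)
    (hyc : ¬ G.Adj y c) :
    G.Adj x c ∧ G.Adj y b := by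
  by_cases hxc : G.Adj x c <;> by_cases hyb : G.Adj y b
  · exact ⟨hxc, hyb⟩
  · exact (hG 4 le_rfl <| G.hasInducedCycle_four (hnd.sublist (by simp))
      hxa (hab.resolve_right hyb) hbc hxc.symm hxb hac).elim
  · exact (hG 4 le_rfl <| G.hasInducedCycle_four (hnd.sublist (by simp))
      hbc (hcd.resolve_right hxc) hdy hyb hbd (fun h => hyc h.symm)).elim
  · exact (hG.adj_or_adj_of_hexagon hnd hxa (hab.resolve_right hyb) hbc
      (hcd.resolve_right hxc) hdy hyx hxb hac had hbd hyc).elim (absurd · hxc) (absurd · hyb)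

end Chordal

theorem tildeGraph_adj (G : SimpleGraph V) (x y u v : V) :
    (tildeGraph G x y).Adj u v ↔ u ≠ v ∧ u ≠ x ∧ u ≠ y ∧ v ≠ x ∧ v ≠ y ∧
      (G.Adj u v ∨ (G.Adj x u ∧ G.Adj y v) ∨ (G.Adj x v ∧ G.Adj y u)) := by
  rw [tildeGraph, SimpleGraph.fromRel_adj, G.adj_comm v u]
  tauto

/-- If `w₁ w₂ w₃ w₄` induce a `4`-cycle in `G~`, with `{x,w₁}, {y,w₄} ∈ E(G)` and
`{w₁,w₄} ∈ E(G~) \ E(G)`, then `{x,w₃} ∈ E(G)` and `{y,w₂} ∈ E(G)`. -/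
theorem tildeGraph_c4_edges (G : SimpleGraph V) (x y : V)
    (hchordal : Chordal G) (hxy : G.Adj x y) (w₁ w₂ w₃ w₄ : V)
    (h12 : (tildeGraph G x y).Adj w₁ w₂) (h23 : (tildeGraph G x y).Adj w₂ w₃)
    (h34 : (tildeGraph G x y).Adj w₃ w₄) (h14 : (tildeGraph G x y).Adj w₁ w₄)
    (h13 : ¬ (tildeGraph G x y).Adj w₁ w₃) (h24 : ¬ (tildeGraph G x y).Adj w₂ w₄)
    (hne13 : w₁ ≠ w₃) (hne24 : w₂ ≠ w₄)
    (hxw1 : G.Adj x w₁) (hyw4 : G.Adj y w₄) (hw14 : ¬ G.Adj w₁ w₄) :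
    G.Adj x w₃ ∧ G.Adj y w₂ := by
  obtain ⟨-, h1x, h1y, h2x, h2y, e12⟩ := (tildeGraph_adj G x y w₁ w₂).mp h12
  obtain ⟨-, -, -, h3x, h3y, e23⟩ := (tildeGraph_adj G x y w₂ w₃).mp h23
  obtain ⟨-, -, -, h4x, h4y, e34⟩ := (tildeGraph_adj G x y w₃ w₄).mp h34
  obtain ⟨hne14, -⟩ := (tildeGraph_adj G x y w₁ w₄).mp h14
  rw [tildeGraph_adj] at h13 h24
  have hw13 : ¬ G.Adj w₁ w₃ := fun h => h13 ⟨hne13, h1x, h1y, h3x, h3y, .inl h⟩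
  have hyw3 : ¬ G.Adj y w₃ := fun h => h13 ⟨hne13, h1x, h1y, h3x, h3y, .inr (.inl ⟨hxw1, h⟩)⟩
  have hw24 : ¬ G.Adj w₂ w₄ := fun h => h24 ⟨hne24, h2x, h2y, h4x, h4y, .inl h⟩
  have hxw2 : ¬ G.Adj x w₂ := fun h => h24 ⟨hne24, h2x, h2y, h4x, h4y, .inr (.inl ⟨h, hyw4⟩)⟩
  have hnd : [x, w₁, w₂, w₃, w₄, y].Nodup := by grind [hxy.ne]
  rcases e23 with e23 | ⟨hxw2', -⟩ | hw32
  · have e12' : G.Adj w₁ w₂ ∨ G.Adj y w₂ := by tauto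
    have e34' : G.Adj w₃ w₄ ∨ G.Adj x w₃ := by tauto
    exact hchordal.adj_and_adj_of_weak_hexagon hnd hxw1 e12' e23 e34' hyw4.symm hxy.symm
      hxw2 hw13 hw14 hw24 hyw3
  · exact absurd hxw2' hxw2
  · exact hw32
end
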